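/- arXiv:0805.3214 — 2 statements merged into one kernel-verified Lean document; each statement's English description precedes it below -/
import Mathlib

section
/- Let K be a field of characteristic zero and let K = K_0 ⊆ K_1 ⊆ ... ⊆ K_r be a tower of fields such that each K_i is a splitting field over K_{i-1} of a polynomial of the form x^{ℓ_i} - a_i with ℓ_i > 0 and a_i ∈ K_{i-1} nonzero. Then the extension K_r / K is a solvable (Galois-solvable) extension, i.e., every element of K_r lies in a solvable closure of K; in particular K_r / K is an algebraic extension. -/
/-!
Each field of a root tower lies in `solvableByRad K L`, the smallest intermediate field closed
under extracting roots, so every element of `L` is solvable by radicals over `K`. The easy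
direction of Abel–Ruffini then makes the Galois group of its minimal polynomial solvable.
-/

/-- A root tower over `K` inside an extension `L`: a finite chain of intermediate fields
`K = K₀ ⊆ K₁ ⊆ ⋯ ⊆ K_r = L` such that each step is obtained as the splitting field
(over the previous one) of a binomial `x ^ ℓ - a` with `ℓ > 0` and `a ≠ 0` in the
previous field. -/
structure RootTower (K L : Type*) [Field K] [Field L] [Algebra K L] where
  r : ℕ
  step : Fin (r + 1) → IntermediateField K L
  first : step 0 = ⊥
  last : step (Fin.last r) = ⊤
  radical : ∀ i : Fin r, ∃ (ℓ : ℕ) (a : L), 0 < ℓ ∧ a ∈ step i.castSucc ∧ a ≠ 0 ∧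
    step i.succ = step i.castSucc ⊔ IntermediateField.adjoin K {x : L | x ^ ℓ = a}

namespace RootTower

variable {K L : Type*} [Field K] [Field L] [Algebra K L]

theorem step_le_solvableByRad (T : RootTower K L) (i : Fin (T.r + 1)) :
    T.step i ≤ solvableByRad K L := by
  induction i using Fin.induction with
  | zero => simp [T.first]
  | succ j ih =>
    obtain ⟨ℓ, a, hℓ, ha, -, hstep⟩ := T.radical j
    rw [hstep, sup_le_iff, IntermediateField.adjoin_le_iff]
    exact ⟨ih, fun x hx => solvableByRad.rad_mem hℓ.ne' (hx ▸ ih ha)⟩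

theorem solvableByRad_eq_top (T : RootTower K L) : solvableByRad K L = ⊤ :=
  top_le_iff.mp (T.last ▸ T.step_le_solvableByRad (Fin.last T.r))

end RootTower

theorem root_tower_solvable_general {K L : Type*} [Field K] [Field L] [Algebra K L]
    (T : RootTower K L) :
    Algebra.IsAlgebraic K L ∧
      ∀ x : L, IsIntegral K x ∧ IsSolvable (minpoly K x).Gal := by
  have hrad (x : L) : x ∈ solvableByRad K L := T.solvableByRad_eq_top ▸ IntermediateField.mem_top
  have hint (x : L) : IsIntegral K x := isIntegral_of_mem_solvableByRad (hrad x)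
  exact ⟨⟨fun x => (hint x).isAlgebraic⟩, fun x => ⟨hint x, isSolvable_gal_minpoly (hrad x)⟩⟩

/-- If `K` has characteristic zero and `K = K₀ ⊆ ⋯ ⊆ K_r = L` is a root tower, then
`L/K` is an algebraic extension and is Galois-solvable: every element of `L` is
algebraic over `K` with solvable Galois group of its minimal polynomial (hence lies
in a solvable closure of `K`). -/
theorem root_tower_solvable {K L : Type*} [Field K] [Field L] [Algebra K L] [CharZero K]
    (T : RootTower K L) :
    Algebra.IsAlgebraic K L ∧
      ∀ x : L, IsIntegral K x ∧ IsSolvable (minpoly K x).Gal :=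
  root_tower_solvable_general T
end

section
/- Let F be an algebraically closed field of characteristic zero and let f ∈ F[x₁, x₂] be irreducible of total degree d ≥ 2 with partial degree deg_{x₁} f = r ≤ 4. Write g(x₁) = f(x₁, t) ∈ F(t)[x₁]. Then g has degree r in x₁, its splitting field over F(t) is contained in the top of a root tower (g is solvable by radicals over F(t)), and if α₁, ..., α_r are the roots of g in that field, then f(α_i(t), t) = 0 for each i. Moreover, for all but finitely many points (a, b) on the curve f = 0, there exists i such that a = α_i(b) (evaluating at t = b). -/
/-!
The roots of a polynomial of degree at most four lie in any subfield closed under radicals that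
contains its coefficients: by Vieta the elementary symmetric functions of the roots lie there, and
the classical resolvents (Lagrange's for the cubic, the differences `x + y - z - w` whose squares
are the roots of Ferrari's resolvent cubic for the quartic) express each root through radicals.

For the curve, `f` irreducible of positive `x₁`-degree is primitive in `F[t][x₁]`, so by Gauss's
lemma `g = f(x₁, t)` is irreducible over `F(t)`. Hence the kernel of `p ↦ p(α, t)` is `(f)` for
every root `α` of `g`, so `F[α, t] ≅ F[x₁, x₂]/(f)`, and every point `(a, b)` of the curve gives
a specialization `F[α, t] → F` with `α ↦ a`, `t ↦ b`: no point needs to be excluded.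
-/

open Polynomial

section SolvableByRad

variable {K Ω : Type*} [Field K] [Field Ω] [Algebra K Ω]

local notation "𝓢" => solvableByRad K Ω

theorem mem_solvableByRad_of_add_mem_of_mul_mem [NeZero (2 : Ω)] {x y : Ω}
    (hs : x + y ∈ 𝓢) (hp : x * y ∈ 𝓢) : x ∈ 𝓢 := by
  have hd : x - y ∈ 𝓢 := solvableByRad.rad_mem two_ne_zero <| by
    rw [show (x - y) ^ 2 = (x + y) ^ 2 - 4 * (x * y) by ring]
    exact sub_mem (pow_mem hs 2) (mul_mem (by simp) hp)
  rw [show x = ((x + y) + (x - y)) / 2 by field_simp; ring]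
  exact div_mem (add_mem hs hd) (by simp)

theorem mem_solvableByRad_of_esymm_mem_of_card_eq_three [IsAlgClosed Ω] [NeZero (2 : Ω)]
    [NeZero (3 : Ω)] {s : Multiset Ω} (hs : s.card = 3) (h1 : s.esymm 1 ∈ 𝓢)
    (h2 : s.esymm 2 ∈ 𝓢) (h3 : s.esymm 3 ∈ 𝓢) {x : Ω} (hx : x ∈ s) : x ∈ 𝓢 := by
  obtain ⟨t, rfl⟩ := Multiset.exists_cons_of_mem hx
  obtain ⟨y, z, rfl⟩ := Multiset.card_eq_two.mp (by simpa using hs)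
  rw [show (x ::ₘ {y, z}).esymm 1 = x + y + z by
    simp [Multiset.esymm, Multiset.powersetCard_one]; ring] at h1
  rw [show (x ::ₘ {y, z}).esymm 2 = x * y + x * z + y * z by
    simp [Multiset.esymm, Multiset.powersetCard_one]; ring] at h2
  rw [show (x ::ₘ {y, z}).esymm 3 = x * y * z by
    simp [Multiset.esymm, Multiset.powersetCard_one]; ring] at h3
  obtain ⟨ω, hω⟩ : ∃ ω : Ω, ω ^ 2 + ω + 1 = 0 := by
    obtain ⟨z, hz⟩ := IsAlgClosed.exists_pow_nat_eq (-3 : Ω) two_pos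
    exact ⟨(z - 1) / 2, by field_simp; linear_combination hz⟩
  set u := x + ω * y + ω ^ 2 * z
  set v := x + ω ^ 2 * y + ω * z
  have huv : u * v = (x + y + z) ^ 2 - 3 * (x * y + x * z + y * z) := by
    linear_combination
      (x * y + x * z + (ω - 1) * (y ^ 2 + z ^ 2) + (ω ^ 2 - ω + 1) * y * z) * hω
  have hsum : u + v = 3 * x - (x + y + z) := by linear_combination (y + z) * hω
  have hcubes : u ^ 3 + v ^ 3 =
      2 * (x + y + z) ^ 3 - 9 * (x + y + z) * (x * y + x * z + y * z) + 27 * (x * y * z) := by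
    rw [show u ^ 3 + v ^ 3 = (u + v) ^ 3 - 3 * (u * v) * (u + v) by ring, huv, hsum]
    ring
  have hcubes_mem : u ^ 3 + v ^ 3 ∈ 𝓢 := by
    rw [hcubes]
    refine add_mem (sub_mem ?_ ?_) (mul_mem (by simp) h3)
    · exact mul_mem (by simp) (pow_mem h1 3)
    · exact mul_mem (mul_mem (by simp) h1) h2
  have hprod_mem : u ^ 3 * v ^ 3 ∈ 𝓢 := by
    rw [← mul_pow, huv]
    exact pow_mem (sub_mem (pow_mem h1 2) (mul_mem (by simp) h2)) 3
  have hu : u ∈ 𝓢 := solvableByRad.rad_mem three_ne_zero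
    (mem_solvableByRad_of_add_mem_of_mul_mem hcubes_mem hprod_mem)
  have hv : v ∈ 𝓢 := solvableByRad.rad_mem three_ne_zero
    (mem_solvableByRad_of_add_mem_of_mul_mem (add_comm (u ^ 3) _ ▸ hcubes_mem)
      (mul_comm (u ^ 3) _ ▸ hprod_mem))
  rw [show x = ((x + y + z) + u + v) / 3 by field_simp; linear_combination -hsum]
  exact div_mem (add_mem (add_mem h1 hu) hv) (by simp)

theorem mem_solvableByRad_of_esymm_mem_of_card_eq_four [IsAlgClosed Ω] [NeZero (2 : Ω)]
    [NeZero (3 : Ω)] {s : Multiset Ω} (hs : s.card = 4) (h1 : s.esymm 1 ∈ 𝓢)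
    (h2 : s.esymm 2 ∈ 𝓢) (h3 : s.esymm 3 ∈ 𝓢) (h4 : s.esymm 4 ∈ 𝓢) {x : Ω} (hx : x ∈ s) :
    x ∈ 𝓢 := by
  obtain ⟨t, rfl⟩ := Multiset.exists_cons_of_mem hx
  obtain ⟨y, z, w, rfl⟩ := Multiset.card_eq_three.mp (by simpa using hs)
  set e₁ := x + y + z + w
  set e₂ := x * y + x * z + x * w + y * z + y * w + z * w
  set e₃ := x * y * z + x * y * w + x * z * w + y * z * w
  set e₄ := x * y * z * w
  rw [show (x ::ₘ {y, z, w}).esymm 1 = e₁ by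
    simp [e₁, Multiset.esymm, Multiset.powersetCard_one]; ring] at h1
  rw [show (x ::ₘ {y, z, w}).esymm 2 = e₂ by
    simp [e₂, Multiset.esymm, Multiset.powersetCard_one]; ring] at h2
  rw [show (x ::ₘ {y, z, w}).esymm 3 = e₃ by
    simp [e₃, Multiset.esymm, Multiset.powersetCard_one]; ring] at h3
  rw [show (x ::ₘ {y, z, w}).esymm 4 = e₄ by
    simp [e₄, Multiset.esymm, Multiset.powersetCard_one]; ring] at h4
  set u₁ := x + y - z - w
  set u₂ := x - y + z - w
  set u₃ := x - y - z + w
  have hsq : ∀ u ∈ ({u₁ ^ 2, u₂ ^ 2, u₃ ^ 2} : Multiset Ω), u ∈ 𝓢 := by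
    refine fun u hu => mem_solvableByRad_of_esymm_mem_of_card_eq_three (by simp) ?_ ?_ ?_ hu
    · rw [show ({u₁ ^ 2, u₂ ^ 2, u₃ ^ 2} : Multiset Ω).esymm 1 = 3 * e₁ ^ 2 - 8 * e₂ by
        simp [e₁, e₂, u₁, u₂, u₃, Multiset.esymm, Multiset.powersetCard_one]; ring]
      exact sub_mem (mul_mem (by simp) (pow_mem h1 2)) (mul_mem (by simp) h2)
    · rw [show ({u₁ ^ 2, u₂ ^ 2, u₃ ^ 2} : Multiset Ω).esymm 2 =
          3 * e₁ ^ 4 - 16 * e₁ ^ 2 * e₂ + 16 * e₁ * e₃ + 16 * e₂ ^ 2 - 64 * e₄ by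
        simp [e₁, e₂, e₃, e₄, u₁, u₂, u₃, Multiset.esymm, Multiset.powersetCard_one]; ring]
      refine sub_mem (add_mem (add_mem (sub_mem ?_ ?_) ?_) ?_) (mul_mem (by simp) h4)
      · exact mul_mem (by simp) (pow_mem h1 4)
      · exact mul_mem (mul_mem (by simp) (pow_mem h1 2)) h2
      · exact mul_mem (mul_mem (by simp) h1) h3
      · exact mul_mem (by simp) (pow_mem h2 2)
    · rw [show ({u₁ ^ 2, u₂ ^ 2, u₃ ^ 2} : Multiset Ω).esymm 3 =
          (e₁ ^ 3 - 4 * e₁ * e₂ + 8 * e₃) ^ 2 by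
        simp [e₁, e₂, e₃, u₁, u₂, u₃, Multiset.esymm, Multiset.powersetCard_one]; ring]
      refine pow_mem (add_mem (sub_mem (pow_mem h1 3) ?_) (mul_mem (by simp) h3)) 2
      exact mul_mem (mul_mem (by simp) h1) h2
  have hu₁ : u₁ ∈ 𝓢 := solvableByRad.rad_mem two_ne_zero (hsq _ (by simp))
  have hu₂ : u₂ ∈ 𝓢 := solvableByRad.rad_mem two_ne_zero (hsq _ (by simp))
  have hu₃ : u₃ ∈ 𝓢 := solvableByRad.rad_mem two_ne_zero (hsq _ (by simp))
  rw [show x = (e₁ + u₁ + u₂ + u₃) / 2 / 2 by field_simp; simp only [e₁, u₁, u₂, u₃]; ring]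
  exact div_mem (div_mem (add_mem (add_mem (add_mem h1 hu₁) hu₂) hu₃) (by simp)) (by simp)

theorem esymm_aroots_mem_solvableByRad [IsAlgClosed Ω] {p : K[X]} (hp : p ≠ 0) {k : ℕ}
    (hk : k ≤ p.natDegree) : (p.aroots Ω).esymm k ∈ 𝓢 := by
  set q := p.map (algebraMap K Ω)
  have hq : q.natDegree = p.natDegree := natDegree_map _
  have hlc : q.leadingCoeff ≠ 0 := by simpa [q] using hp
  have hvieta := coeff_eq_esymm_roots_of_splits (IsAlgClosed.splits q) (k := p.natDegree - k)
    (by omega)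
  rw [hq, Nat.sub_sub_self hk] at hvieta
  rw [aroots_def,
    show q.roots.esymm k = q.coeff (p.natDegree - k) / (q.leadingCoeff * (-1) ^ k) by
      rw [hvieta]; field_simp]
  exact div_mem (by simp [q, coeff_map])
    (mul_mem (by simp [q, leadingCoeff_map]) (pow_mem (neg_mem (one_mem _)) k))

theorem mem_solvableByRad_of_mem_aroots_of_natDegree_eq_four [IsAlgClosed Ω] [NeZero (2 : Ω)]
    [NeZero (3 : Ω)] {p : K[X]} (hp : p.natDegree = 4) {x : Ω} (hx : x ∈ p.aroots Ω) :
    x ∈ 𝓢 := by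
  have hp0 : p ≠ 0 := by rintro rfl; simp at hp
  have hcard : (p.aroots Ω).card = 4 := by
    rw [aroots_def, ← hp, ← natDegree_map (algebraMap K Ω)]
    exact splits_iff_card_roots.mp (IsAlgClosed.splits _)
  have h : ∀ k ≤ 4, (p.aroots Ω).esymm k ∈ 𝓢 := fun k hk =>
    esymm_aroots_mem_solvableByRad hp0 (hp ▸ hk)
  exact mem_solvableByRad_of_esymm_mem_of_card_eq_four hcard (h 1 (by norm_num))
    (h 2 (by norm_num)) (h 3 (by norm_num)) (h 4 le_rfl) hx

theorem mem_solvableByRad_of_mem_rootSet_of_natDegree_le_four [IsAlgClosed Ω] [NeZero (2 : Ω)]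
    [NeZero (3 : Ω)] {p : K[X]} (hp : p.natDegree ≤ 4) {x : Ω} (hx : x ∈ p.rootSet Ω) :
    x ∈ 𝓢 := by
  obtain ⟨hp0, hpx⟩ := mem_rootSet.mp hx
  -- pad with the root `0` to reach degree exactly four
  refine mem_solvableByRad_of_mem_aroots_of_natDegree_eq_four
    (p := X ^ (4 - p.natDegree) * p) ?_ ?_
  · rw [natDegree_mul (pow_ne_zero _ X_ne_zero) hp0, natDegree_X_pow]
    omega
  · exact mem_aroots.mpr ⟨mul_ne_zero (pow_ne_zero _ X_ne_zero) hp0, by simp [hpx]⟩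

end SolvableByRad

theorem RingHom.exists_lift_range {A B C : Type*} [Ring A] [Ring B] [Ring C] (ψ : A →+* B)
    (χ : A →+* C) (h : RingHom.ker ψ ≤ RingHom.ker χ) :
    ∃ φ : ψ.range →+* C, ∀ a y (hy : ψ a = y), φ ⟨y, a, hy⟩ = χ a := by
  refine ⟨ψ.rangeRestrict.liftOfSurjective ψ.rangeRestrict_surjective
    ⟨χ, by rwa [ker_rangeRestrict]⟩, fun a _ hy => ?_⟩
  subst hy
  exact ψ.rangeRestrict.liftOfSurjective_comp_apply _ _ a

namespace MvPolynomial

noncomputable def finTwoAlgEquiv (R : Type*) [CommSemiring R] :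
    MvPolynomial (Fin 2) R ≃ₐ[R] R[X][X] :=
  (finSuccEquiv R 1).trans (Polynomial.mapAlgEquiv (uniqueAlgEquiv R (Fin 1)))

variable {R : Type*} [CommSemiring R]

theorem finTwoAlgEquiv_apply (p : MvPolynomial (Fin 2) R) :
    finTwoAlgEquiv R p = (finSuccEquiv R 1 p).map (uniqueAlgEquiv R (Fin 1)) := rfl

theorem finTwoAlgEquiv_X_zero : finTwoAlgEquiv R (X 0) = Polynomial.X := by
  rw [finTwoAlgEquiv_apply, finSuccEquiv_X_zero, Polynomial.map_X]

theorem finTwoAlgEquiv_X_one : finTwoAlgEquiv R (X 1) = Polynomial.C Polynomial.X := by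
  rw [finTwoAlgEquiv_apply, show (1 : Fin 2) = Fin.succ 0 from rfl, finSuccEquiv_X_succ,
    Polynomial.map_C]
  simp

theorem natDegree_finTwoAlgEquiv (p : MvPolynomial (Fin 2) R) :
    (finTwoAlgEquiv R p).natDegree = p.degreeOf 0 := by
  rw [finTwoAlgEquiv_apply, natDegree_map_eq_of_injective (uniqueAlgEquiv R (Fin 1)).injective,
    natDegree_finSuccEquiv]

theorem eval₂_eq_aeval_eval₂ {K A : Type*} [CommSemiring K] [CommSemiring A] [Algebra K A]
    (i : R →+* K) (t : K) (α : A) (p : MvPolynomial (Fin 2) R) :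
    eval₂ ((algebraMap K A).comp i) ![α, algebraMap K A t] p
      = Polynomial.aeval α (eval₂ (Polynomial.C.comp i) ![Polynomial.X, Polynomial.C t] p) := by
  rw [← AlgHom.coe_toRingHom, eval₂_comp_left]
  congr 1
  · ext; simp
  · funext j; fin_cases j <;> simp

noncomputable def toRatFuncPoly (F : Type*) [Field F] :
    MvPolynomial (Fin 2) F →+* (RatFunc F)[X] :=
  eval₂Hom (Polynomial.C.comp (algebraMap F (RatFunc F))) ![Polynomial.X, Polynomial.C RatFunc.X]

section RatFunc

variable {F : Type*} [Field F]

theorem map_finTwoAlgEquiv (p : MvPolynomial (Fin 2) F) :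
    (finTwoAlgEquiv F p).map (algebraMap F[X] (RatFunc F)) = toRatFuncPoly F p := by
  refine RingHom.congr_fun (f := (Polynomial.mapRingHom _).comp (finTwoAlgEquiv F).toRingHom)
    (ringHom_ext (fun a => ?_) (fun j => ?_)) p
  · change Polynomial.map _ (finTwoAlgEquiv F (algebraMap F _ a)) = _
    rw [AlgEquiv.commutes]
    simp [toRatFuncPoly, Polynomial.algebraMap_apply]
  · fin_cases j <;> simp [toRatFuncPoly, finTwoAlgEquiv_X_zero, finTwoAlgEquiv_X_one]

theorem natDegree_toRatFuncPoly (p : MvPolynomial (Fin 2) F) :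
    (toRatFuncPoly F p).natDegree = p.degreeOf 0 := by
  rw [← map_finTwoAlgEquiv, natDegree_map_eq_of_injective (IsFractionRing.injective _ _),
    natDegree_finTwoAlgEquiv]

variable {f : MvPolynomial (Fin 2) F}

theorem isPrimitive_finTwoAlgEquiv (hf : Irreducible f) (h0 : f.degreeOf 0 ≠ 0) :
    (finTwoAlgEquiv F f).IsPrimitive :=
  (hf.map (finTwoAlgEquiv F)).isPrimitive (by rwa [natDegree_finTwoAlgEquiv])

theorem irreducible_toRatFuncPoly (hf : Irreducible f) (h0 : f.degreeOf 0 ≠ 0) :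
    Irreducible (toRatFuncPoly F f) := by
  rw [← map_finTwoAlgEquiv,
    ← (isPrimitive_finTwoAlgEquiv hf h0).irreducible_iff_irreducible_map_fraction_map]
  exact hf.map (finTwoAlgEquiv F)

theorem dvd_of_eval₂_eq_zero {Ω : Type*} [Field Ω] [Algebra (RatFunc F) Ω] (hf : Irreducible f)
    (h0 : f.degreeOf 0 ≠ 0) {α : Ω} (hα : Polynomial.aeval α (toRatFuncPoly F f) = 0)
    {p : MvPolynomial (Fin 2) F}
    (hp : eval₂ ((algebraMap (RatFunc F) Ω).comp (algebraMap F (RatFunc F)))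
      ![α, algebraMap (RatFunc F) Ω RatFunc.X] p = 0) : f ∣ p := by
  have hp' : Polynomial.aeval α (toRatFuncPoly F p) = 0 := by rwa [eval₂_eq_aeval_eval₂] at hp
  have hdvd := ((irreducible_toRatFuncPoly hf h0).dvd_iff_aeval_eq_zero hα).mp hp'
  rw [← map_finTwoAlgEquiv, ← map_finTwoAlgEquiv] at hdvd
  exact (map_dvd_iff (finTwoAlgEquiv F)).mp
    ((isPrimitive_finTwoAlgEquiv hf h0).dvd_of_fraction_map_dvd_fraction_map hdvd)

end RatFunc

end MvPolynomial

theorem parametrization_by_partial_degree_general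
    {F : Type*} [Field F] [CharZero F]
    (f : MvPolynomial (Fin 2) F) (hf : Irreducible f)
    (r : ℕ)
    (hr : MvPolynomial.degreeOf 0 f = r) (hr1 : 1 ≤ r) (hr4 : r ≤ 4) :
    let K := RatFunc F
    let Ω := AlgebraicClosure K
    let g : Polynomial K :=
      MvPolynomial.eval₂ (Polynomial.C.comp (algebraMap F K))
        ![Polynomial.X, Polynomial.C RatFunc.X] f
    g.natDegree = r ∧
    (∀ x ∈ g.rootSet Ω, x ∈ solvableByRad K Ω) ∧
    (∀ α ∈ g.rootSet Ω,
      MvPolynomial.eval₂ ((algebraMap K Ω).comp (algebraMap F K))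
        ![α, algebraMap K Ω RatFunc.X] f = 0) ∧
    ∃ Δ : Finset (F × F), ∀ a b : F,
      MvPolynomial.eval ![a, b] f = 0 → (a, b) ∉ Δ →
        ∃ (α : Ω) (_ : α ∈ g.rootSet Ω) (R : Subring Ω) (φ : R →+* F),
          (∀ c : F, ∃ h : algebraMap K Ω (algebraMap F K c) ∈ R, φ ⟨_, h⟩ = c) ∧
          (∃ hX : algebraMap K Ω RatFunc.X ∈ R, φ ⟨_, hX⟩ = b) ∧
          (∃ hα : α ∈ R, φ ⟨α, hα⟩ = a) := by
  intro K Ω g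
  have hg : g = MvPolynomial.toRatFuncPoly F f := rfl
  have hf0 : f.degreeOf 0 ≠ 0 := by omega
  have hdeg : g.natDegree = r := by rw [hg, MvPolynomial.natDegree_toRatFuncPoly, hr]
  have hroot (α : Ω) (hα : α ∈ g.rootSet Ω) :
      MvPolynomial.eval₂ ((algebraMap K Ω).comp (algebraMap F K))
        ![α, algebraMap K Ω RatFunc.X] f = 0 := by
    rw [MvPolynomial.eval₂_eq_aeval_eval₂]
    exact aeval_eq_zero_of_mem_rootSet hα
  refine ⟨hdeg, fun x hx => mem_solvableByRad_of_mem_rootSet_of_natDegree_le_four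
    (hdeg ▸ hr4) hx, hroot, ∅, fun a b hab _ => ?_⟩
  obtain ⟨α, hα⟩ : ∃ α : Ω, α ∈ g.rootSet Ω := by
    have hg0 : g ≠ 0 := by rintro h; simp [h] at hdeg; omega
    obtain ⟨α, hα⟩ := IsAlgClosed.exists_aeval_eq_zero Ω g (by
      rw [degree_eq_natDegree hg0, hdeg]; exact_mod_cast (by omega : r ≠ 0))
    exact ⟨α, mem_rootSet.mpr ⟨hg0, hα⟩⟩
  set ψ := MvPolynomial.eval₂Hom ((algebraMap K Ω).comp (algebraMap F K))
    ![α, algebraMap K Ω RatFunc.X]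
  obtain ⟨φ, hφ⟩ := ψ.exists_lift_range (MvPolynomial.eval ![a, b]) fun p hp => by
    obtain ⟨q, rfl⟩ := MvPolynomial.dvd_of_eval₂_eq_zero hf hf0 (aeval_eq_zero_of_mem_rootSet hα)
      (RingHom.mem_ker.mp hp)
    simp [hab]
  exact ⟨α, hα, ψ.range, φ, fun c => ⟨_, (hφ (.C c) _ (by simp [ψ])).trans (by simp)⟩,
    ⟨_, (hφ (.X 1) _ (by simp [ψ])).trans (by simp)⟩,
    ⟨_, (hφ (.X 0) _ (by simp [ψ])).trans (by simp)⟩⟩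

/-- Let `F` be algebraically closed of characteristic zero and `f ∈ F[x₁,x₂]` irreducible
of total degree `d ≥ 2` with `deg_{x₁} f = r ≤ 4`.  Let `g(x₁) = f(x₁, t) ∈ F(t)[x₁]`.
Then `g` has degree `r`, all its roots (in an algebraic closure of `F(t)`) are solvable by
radicals over `F(t)`, each root `α` satisfies `f(α, t) = 0`, and for all but finitely many
points `(a, b)` of the curve `f = 0` there is a root `α` of `g` and a specialization
homomorphism fixing `F`, sending `t` to `b` and `α` to `a`   (i.e. `a = α(b)`). -/
theorem parametrization_by_partial_degree
    {F : Type*} [Field F] [IsAlgClosed F] [CharZero F]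
    (f : MvPolynomial (Fin 2) F) (hf : Irreducible f)
    (d r : ℕ) (hd : f.totalDegree = d) (hd2 : 2 ≤ d)
    (hr : MvPolynomial.degreeOf 0 f = r) (hr1 : 1 ≤ r) (hr4 : r ≤ 4) :
    let K := RatFunc F
    let Ω := AlgebraicClosure K
    let g : Polynomial K :=
      MvPolynomial.eval₂ (Polynomial.C.comp (algebraMap F K))
        ![Polynomial.X, Polynomial.C RatFunc.X] f
    g.natDegree = r ∧
    (∀ x ∈ g.rootSet Ω, x ∈ solvableByRad K Ω) ∧
    (∀ α ∈ g.rootSet Ω,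
      MvPolynomial.eval₂ ((algebraMap K Ω).comp (algebraMap F K))
        ![α, algebraMap K Ω RatFunc.X] f = 0) ∧
    ∃ Δ : Finset (F × F), ∀ a b : F,
      MvPolynomial.eval ![a, b] f = 0 → (a, b) ∉ Δ →
        ∃ (α : Ω) (_ : α ∈ g.rootSet Ω) (R : Subring Ω) (φ : R →+* F),
          (∀ c : F, ∃ h : algebraMap K Ω (algebraMap F K c) ∈ R, φ ⟨_, h⟩ = c) ∧
          (∃ hX : algebraMap K Ω RatFunc.X ∈ R, φ ⟨_, hX⟩ = b) ∧
          (∃ hα : α ∈ R, φ ⟨α, hα⟩ = a) :=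
  parametrization_by_partial_degree_general f hf r hr hr1 hr4
end
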